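/- arXiv:2401.13932 — 2 statements merged into one kernel-verified Lean document; each statement's English description precedes it below -/
import Mathlib

section
/- Let X be any Banach space, 1 < q < ∞, d ≥ 1 and 0 < β, γ ≤ 1. There exist constants c₁, c₂ > 0 depending only on d, γ, β such that for every f ∈ C_c(ℝ^d) ⊗ X and every x ∈ ℝ^d, c₁ G_{q,γ,β}(f)(x) ≤ S_{q,γ,β}(f)(x) ≤ c₂ G_{q,γ,β}(f)(x). -/
/-!
Translating a kernel `φ ∈ H_{γ,β}` in its first variable by a vector of length at most `1` and
dividing by a constant `C = C(d, β, γ)` gives again a kernel of `H_{γ,β}`: near the diagonal the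
regularity estimate is applied at the translated point, far from it the increment is comparable to
`1 + |x - y|` and the size estimate suffices. Rescaled by `t`, this gives
`A(f)(x,t) ≤ C A(f)(y,t)` whenever `|x - y| ≤ t`. Hence on each slice `B(x,t) × {t}` of the cone
`Γ(x)` the integrand of `S_q` is comparable to `A(f)(x,t)`, and integrating over the ball, of
volume `|B(0,1)| t^d`, turns `S_q(f)(x)` into `G_q(f)(x)` up to the factor `|B(0,1)|^{1/q}`,
which lies between `min(|B(0,1)|, 1)` and `max(|B(0,1)|, 1)` for `q ≥ 1`.
-/

open MeasureTheory ENNReal Real Set Metric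

noncomputable section

/-- Euclidean space `ℝ^d`. -/
abbrev Euc (d : ℕ) := EuclideanSpace ℝ (Fin d)

/-- Membership in `C_c(ℝ^d) ⊗ X`: finite linear combinations of products of compactly
supported continuous scalar functions with vectors of `X`. -/
def IsCcTensor (d : ℕ) {X : Type*} [NormedAddCommGroup X] [NormedSpace ℝ X]
    (f : Euc d → X) : Prop :=
  ∃ (n : ℕ) (φ : Fin n → Euc d → ℝ) (v : Fin n → X),
    (∀ i, Continuous (φ i) ∧ HasCompactSupport (φ i)) ∧
    ∀ x, f x = ∑ i, φ i x • v i

/-- Membership in `C_c(ℝ^{d+1}_+) ⊗ X`. -/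
def IsCcTensorUp (d : ℕ) {X : Type*} [NormedAddCommGroup X] [NormedSpace ℝ X]
    (f : Euc d × ℝ → X) : Prop :=
  ∃ (n : ℕ) (φ : Fin n → Euc d × ℝ → ℝ) (v : Fin n → X),
    (∀ i, Continuous (φ i) ∧ HasCompactSupport (φ i) ∧
      tsupport (φ i) ⊆ {p : Euc d × ℝ | 0 < p.2}) ∧
    ∀ p, f p = ∑ i, φ i p • v i

/-- The size, regularity and conservation assumptions on the kernels `K(t,x,y)`
of the semigroup `e^{-tL}`, with constants `c` and parameters `β, γ`. -/
structure KernelEstimates (d : ℕ) (K : ℝ → Euc d → Euc d → ℝ) (c β γ : ℝ) : Prop where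
  size : ∀ t > (0:ℝ), ∀ x y : Euc d,
    |K t x y| ≤ c * t ^ β / (t + dist x y) ^ ((d : ℝ) + β)
  reg : ∀ t > (0:ℝ), ∀ x y h : Euc d, 2 * ‖h‖ ≤ t + dist x y →
    |K t (x + h) y - K t x y| + |K t x (y + h) - K t x y| ≤
      c * ‖h‖ ^ γ * t ^ β / (t + dist x y) ^ ((d : ℝ) + β + γ)
  conserv₁ : ∀ t > (0:ℝ), ∀ y : Euc d, ∫ x, K t x y = 1
  conserv₂ : ∀ t > (0:ℝ), ∀ x : Euc d, ∫ y, K t x y = 1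

/-- `K` is the family of integral kernels of the holomorphic semigroup `{e^{-tL}}_{t>0}`
generated by a sectorial operator `L` of type `α` (`0 ≤ α < π/2`): it satisfies the
semigroup property and extends holomorphically to the sector `|arg z| < π/2 - α`. -/
structure IsSectorialSemigroupKernel (d : ℕ) (α : ℝ) (K : ℝ → Euc d → Euc d → ℝ) : Prop where
  α_nonneg : 0 ≤ α
  α_lt : α < π / 2
  semigroup : ∀ t > (0:ℝ), ∀ s > (0:ℝ), ∀ x y : Euc d,
    K (t + s) x y = ∫ z, K t x z * K s z y
  holo : ∃ Kc : ℂ → Euc d → Euc d → ℂ,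
    (∀ t : ℝ, 0 < t → ∀ x y, Kc (t : ℂ) x y = (K t x y : ℂ)) ∧
    ∀ x y, DifferentiableOn ℂ (fun z => Kc z x y)
      {z : ℂ | z ≠ 0 ∧ |Complex.arg z| < π / 2 - α}

/-- The Poisson kernel, i.e. the kernel of `e^{-t√Δ}`. -/
def poissonKernelEuc (d : ℕ) (t : ℝ) (x y : Euc d) : ℝ :=
  (Real.Gamma (((d : ℝ) + 1) / 2) / π ^ (((d : ℝ) + 1) / 2)) *
    t / (t ^ 2 + dist x y ^ 2) ^ (((d : ℝ) + 1) / 2)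

/-- The kernel `k(t,x,y) = t ∂_t K(t,x,y)` of `-tLe^{-tL}`. -/
def tDerivKernel (d : ℕ) (K : ℝ → Euc d → Euc d → ℝ) (t : ℝ) (x y : Euc d) : ℝ :=
  t * deriv (fun s => K s x y) t

/-- `Q(f)(x,t) = -tLe^{-tL}f(x) = ∫ t ∂_t K(t,x,z) f(z) dz`. -/
def Qop (d : ℕ) {X : Type*} [NormedAddCommGroup X] [NormedSpace ℝ X]
    (K : ℝ → Euc d → Euc d → ℝ) (f : Euc d → X) : Euc d × ℝ → X :=
  fun p => ∫ z, tDerivKernel d K p.2 p.1 z • f z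

/-- The conical square (Lusin area) functional `A_q` on `ℝ≥0∞`-valued functions on
`ℝ^{d+1}_+`. -/
def AqE (d : ℕ) (q : ℝ) (u : Euc d × ℝ → ℝ≥0∞) (x : Euc d) : ℝ≥0∞ :=
  (∫⁻ t in Ioi (0:ℝ),
      (∫⁻ y in ball x t, u (y, t) ^ q) / ENNReal.ofReal (t ^ (d + 1))) ^ (1 / q)

/-- The vertical (g-function) functional on `ℝ≥0∞`-valued functions. -/
def GqE (d : ℕ) (q : ℝ) (u : Euc d × ℝ → ℝ≥0∞) (x : Euc d) : ℝ≥0∞ :=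
  (∫⁻ t in Ioi (0:ℝ), u (x, t) ^ q / ENNReal.ofReal t) ^ (1 / q)

/-- The Lusin area functional `A_q(u)(x) = (∫_{Γ(x)} ‖u(y,t)‖^q dy dt/t^{d+1})^{1/q}`. -/
def Aq (d : ℕ) (q : ℝ) {X : Type*} [NormedAddCommGroup X]
    (u : Euc d × ℝ → X) (x : Euc d) : ℝ≥0∞ :=
  AqE d q (fun p => (‖u p‖₊ : ℝ≥0∞)) x

/-- The g-functional `G_q(u)(x) = (∫₀^∞ ‖u(x,t)‖^q dt/t)^{1/q}`. -/
def Gq (d : ℕ) (q : ℝ) {X : Type*} [NormedAddCommGroup X]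
    (u : Euc d × ℝ → X) (x : Euc d) : ℝ≥0∞ :=
  GqE d q (fun p => (‖u p‖₊ : ℝ≥0∞)) x

/-- The tent over the ball `B(z,r)`. -/
def tentSet (d : ℕ) (z : Euc d) (r : ℝ) : Set (Euc d × ℝ) :=
  {p : Euc d × ℝ | 0 < p.2 ∧ dist p.1 z + p.2 ≤ r}

/-- `∫_{B̂} ‖u(y,t)‖^q dy dt/t` over the tent of `B(z,r)`. -/
def tentIntegral (d : ℕ) (q : ℝ) {X : Type*} [NormedAddCommGroup X]
    (u : Euc d × ℝ → X) (z : Euc d) (r : ℝ) : ℝ≥0∞ :=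
  ∫⁻ t in Ioi (0:ℝ),
    (∫⁻ y in {y : Euc d | dist y z + t ≤ r}, (‖u (y, t)‖₊ : ℝ≥0∞) ^ q) / ENNReal.ofReal t

/-- The Carleson functional `C_q(u)(x) = sup_{B ∋ x} (|B|⁻¹ ∫_{B̂} ‖u‖^q dy dt/t)^{1/q}`. -/
def Cq (d : ℕ) (q : ℝ) {X : Type*} [NormedAddCommGroup X]
    (u : Euc d × ℝ → X) (x : Euc d) : ℝ≥0∞ :=
  ⨆ (z : Euc d) (r : ℝ) (_ : 0 < r) (_ : x ∈ ball z r),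
    ((volume (ball z r))⁻¹ * tentIntegral d q u z r) ^ (1 / q)

/-- `L^p(ℝ^d)`-norm (`1 ≤ p < ∞`) of an `ℝ≥0∞`-valued function. -/
def LpN (d : ℕ) (p : ℝ) (g : Euc d → ℝ≥0∞) : ℝ≥0∞ :=
  (∫⁻ x, g x ^ p) ^ (1 / p)

/-- `L^p(ℝ^d)`-norm, `1 ≤ p ≤ ∞`. -/
def LpNE (d : ℕ) (p : ℝ≥0∞) (g : Euc d → ℝ≥0∞) : ℝ≥0∞ :=
  if p = ∞ then essSup g volume else (∫⁻ x, g x ^ p.toReal) ^ (1 / p.toReal)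

/-- The `BMO_{q,L}`-type norm `sup_B (|B|⁻¹ ∫_{B̂} ‖u(y,t)‖^q dy dt/t)^{1/q}`. -/
def bmoQNorm (d : ℕ) (q : ℝ) {X : Type*} [NormedAddCommGroup X]
    (u : Euc d × ℝ → X) : ℝ≥0∞ :=
  ⨆ (z : Euc d) (r : ℝ) (_ : 0 < r),
    ((volume (ball z r))⁻¹ * tentIntegral d q u z r) ^ (1 / q)

/-- `X` has martingale type `q` with constant `c₀`: every finite `X`-valued
`L^q`-martingale `(f_n)` satisfies `sup_n E‖f_n‖^q ≤ c₀^q (E‖f_0‖^q + Σ E‖f_n - f_{n-1}‖^q)`. -/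
def MartingaleTypeWith (X : Type*) [NormedAddCommGroup X] [NormedSpace ℝ X] [CompleteSpace X]
    (q c₀ : ℝ) : Prop :=
  ∀ (Ω : Type) (mΩ : MeasurableSpace Ω) (μ : Measure Ω), IsProbabilityMeasure μ →
    ∀ (ℱ : Filtration ℕ mΩ) (f : ℕ → Ω → X), Martingale f ℱ μ →
    (∀ n, MemLp (f n) (ENNReal.ofReal q) μ) →
    ∀ N : ℕ, (∀ n, N ≤ n → f n = f N) →
    ∀ n, ∫ ω, ‖f n ω‖ ^ q ∂μ ≤
      c₀ ^ q * ((∫ ω, ‖f 0 ω‖ ^ q ∂μ) +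
        ∑ k ∈ Finset.range N, ∫ ω, ‖f (k + 1) ω - f k ω‖ ^ q ∂μ)

/-- `X` is of martingale type `q`. -/
def HasMartingaleType (X : Type*) [NormedAddCommGroup X] [NormedSpace ℝ X] [CompleteSpace X]
    (q : ℝ) : Prop :=
  ∃ c₀ > 0, MartingaleTypeWith X q c₀

/-- The martingale type `q` constant `M_{t,q}(X)` of `X`. -/
def martingaleTypeConst (X : Type*) [NormedAddCommGroup X] [NormedSpace ℝ X] [CompleteSpace X]
    (q : ℝ) : ℝ :=
  sInf {c₀ : ℝ | 0 ≤ c₀ ∧ MartingaleTypeWith X q c₀}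

/-- An `X`-valued atom: supported in a ball `B`, mean zero, and `‖a‖_∞ ≤ |B|⁻¹`. -/
def IsXAtom (d : ℕ) {X : Type*} [NormedAddCommGroup X] [NormedSpace ℝ X]
    (a : Euc d → X) : Prop :=
  StronglyMeasurable a ∧ ∃ (z : Euc d) (r : ℝ), 0 < r ∧
    (∀ x, x ∉ ball z r → a x = 0) ∧ (∫ x, a x = 0) ∧
    ∀ x, ‖a x‖ ≤ ((volume (ball z r)).toReal)⁻¹

/-- The atomic Hardy space norm `‖f‖_{H¹_at(ℝ^d;X)}`. -/
def atomicH1Norm (d : ℕ) {X : Type*} [NormedAddCommGroup X] [NormedSpace ℝ X]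
    (f : Euc d → X) : ℝ≥0∞ :=
  sInf {M : ℝ≥0∞ | ∃ (lam : ℕ → ℝ) (a : ℕ → Euc d → X),
    (∀ n, IsXAtom d (a n)) ∧
    (∀ᵐ x, HasSum (fun n => lam n • a n x) (f x)) ∧
    M = ∑' n, ENNReal.ofReal |lam n|}

/-- The `BMO(ℝ^d;X)` norm. -/
def bmoNorm (d : ℕ) {X : Type*} [NormedAddCommGroup X] [NormedSpace ℝ X]
    (f : Euc d → X) : ℝ≥0∞ :=
  ⨆ (z : Euc d) (r : ℝ) (_ : 0 < r),
    (volume (ball z r))⁻¹ *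
      ∫⁻ x in ball z r, (‖f x - ⨍ y in ball z r, f y‖₊ : ℝ≥0∞)

/-- An `(X,q)`-atom in the tent space. -/
def IsTentAtom (d : ℕ) (q : ℝ) {X : Type*} [NormedAddCommGroup X]
    (a : Euc d × ℝ → X) : Prop :=
  AEStronglyMeasurable a volume ∧ ∃ (z : Euc d) (r : ℝ), 0 < r ∧
    (∀ p : Euc d × ℝ, p ∉ tentSet d z r → a p = 0) ∧
    (∫⁻ t in Ioi (0:ℝ), (∫⁻ y, (‖a (y, t)‖₊ : ℝ≥0∞) ^ q) / ENNReal.ofReal t) ^ (1 / q) ≤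
      (volume (ball z r)) ^ (1 / q - 1)

/-- The operator `π_L(f)(x) = ∫₀^∞ Q(f(·,t))(x,t) dt/t`. -/
def piL (d : ℕ) {X : Type*} [NormedAddCommGroup X] [NormedSpace ℝ X]
    (K : ℝ → Euc d → Euc d → ℝ) (f : Euc d × ℝ → X) : Euc d → X :=
  fun x => ∫ w in {w : Euc d × ℝ | 0 < w.2}, (tDerivKernel d K w.2 x w.1 / w.2) • f w

/-- The operator `𝒦(f)(x,t) = ∫_{ℝ^{d+1}_+} 𝒦_{t,s}(x,y) f(y,s) dy ds/s`. -/
def tentKernelOp (d : ℕ) {X : Type*} [NormedAddCommGroup X] [NormedSpace ℝ X]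
    (𝒦 : ℝ → ℝ → Euc d → Euc d → ℝ) (f : Euc d × ℝ → X) : Euc d × ℝ → X :=
  fun p => ∫ w in {w : Euc d × ℝ | 0 < w.2}, (𝒦 p.2 w.2 p.1 w.1 / w.2) • f w

/-- Membership in Wilson's family `H_{γ,β}`. -/
def MemHol (d : ℕ) (γ β : ℝ) (φ : Euc d → Euc d → ℝ) : Prop :=
  (∀ x y : Euc d, |φ x y| ≤ (1 + dist x y) ^ (-((d : ℝ) + β))) ∧
  (∀ x y h : Euc d, 2 * ‖h‖ ≤ 1 + dist x y →
    |φ (x + h) y - φ x y| + |φ x (y + h) - φ x y| ≤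
      ‖h‖ ^ γ * (1 + dist x y) ^ (-((d : ℝ) + β + γ))) ∧
  (∀ y : Euc d, ∫ x, φ x y = 0) ∧ (∀ x : Euc d, ∫ y, φ x y = 0)

/-- Wilson's intrinsic functional
`A_{γ,β}(f)(x,t) = sup_{φ ∈ H_{γ,β}} ‖∫ φ_t(x,y) f(y) dy‖`. -/
def intrinsicA (d : ℕ) (γ β : ℝ) {X : Type*} [NormedAddCommGroup X] [NormedSpace ℝ X]
    (f : Euc d → X) (p : Euc d × ℝ) : ℝ≥0∞ :=
  ⨆ (φ : {φ : Euc d → Euc d → ℝ // MemHol d γ β φ}),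
    (‖∫ y, ((p.2 ^ d)⁻¹ * φ.1 (p.2⁻¹ • p.1) (p.2⁻¹ • y)) • f y‖₊ : ℝ≥0∞)

universe u

lemma rpow_neg_le_mul_rpow_neg {a b m s : ℝ} (ha : 0 < a) (hm : 0 < m) (hs : 0 ≤ s)
    (hab : a ≤ m * b) : b ^ (-s) ≤ m ^ s * a ^ (-s) := by
  have hb : a / m ≤ b := by rwa [div_le_iff₀' hm]
  calc b ^ (-s) ≤ (a / m) ^ (-s) :=
        Real.rpow_le_rpow_of_nonpos (div_pos ha hm) hb (neg_nonpos.2 hs)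
    _ = m ^ s * a ^ (-s) := by
        rw [Real.div_rpow ha.le hm.le, Real.rpow_neg hm.le, div_inv_eq_mul, mul_comm]

-- `4 ^ (d + β)` pays for the size estimate at a point whose `1 + |x - y|` shrank by at most
-- a factor `4`, the extra `4 ^ (γ + 1)` for the regularity estimate far from the diagonal.
def holTranslateConst (d : ℕ) (β γ : ℝ) : ℝ := 4 ^ ((d : ℝ) + β + γ + 1)

lemma holTranslateConst_pos (d : ℕ) (β γ : ℝ) : 0 < holTranslateConst d β γ := by
  unfold holTranslateConst; positivity

lemma rpow_le_holTranslateConst {d : ℕ} {β γ a e : ℝ} (ha : 1 ≤ a) (ha4 : a ≤ 4) (he : 0 ≤ e)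
    (he' : e ≤ (d : ℝ) + β + γ + 1) : a ^ e ≤ holTranslateConst d β γ :=
  (Real.rpow_le_rpow (by linarith) ha4 he).trans
    (Real.rpow_le_rpow_of_exponent_le (by norm_num) he')

lemma holTranslateConst_eq (d : ℕ) (β γ : ℝ) :
    holTranslateConst d β γ = 4 * 4 ^ ((d : ℝ) + β) * 4 ^ γ := by
  rw [holTranslateConst, Real.rpow_add four_pos, Real.rpow_add four_pos, Real.rpow_one]
  ring

namespace MemHol

variable {d : ℕ} {β γ : ℝ} {φ : Euc d → Euc d → ℝ}

lemma abs_le_of_one_add_dist_le (hφ : MemHol d γ β φ) (hβ : 0 ≤ β) {a b : Euc d} {D : ℝ}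
    (hD : 0 ≤ D) (hab : 1 + D ≤ 4 * (1 + dist a b)) :
    |φ a b| ≤ 4 ^ ((d : ℝ) + β) * (1 + D) ^ (-((d : ℝ) + β)) :=
  (hφ.1 a b).trans <| rpow_neg_le_mul_rpow_neg (by positivity) (by norm_num) (by positivity) hab

lemma regularity_translate (hφ : MemHol d γ β φ) (hβ : 0 ≤ β) (hγ : 0 ≤ γ) {h : Euc d}
    (hh : ‖h‖ ≤ 1) {u v k : Euc d} (hk : 2 * ‖k‖ ≤ 1 + dist u v) :
    |φ (u + k + h) v - φ (u + h) v| + |φ (u + h) (v + k) - φ (u + h) v| ≤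
      holTranslateConst d β γ * ‖k‖ ^ γ * (1 + dist u v) ^ (-((d : ℝ) + β + γ)) := by
  set D := dist u v
  have hD : 0 ≤ D := dist_nonneg
  have hdist : ∀ w z : Euc d, D ≤ ‖w‖ + dist (u + w) (v + z) + ‖z‖ := fun w z => by
    simpa [D, dist_self_add_right, dist_comm (v + z) v] using dist_triangle4 u (u + w) (v + z) v
  have h2 : 1 + D ≤ 2 * (1 + dist (u + h) v) := by
    have := hdist h 0
    simp only [add_zero, norm_zero] at this
    linarith [dist_nonneg (x := u + h) (y := v)]
  by_cases hnear : 2 * ‖k‖ ≤ 1 + dist (u + h) v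
  · -- near the diagonal the regularity estimate at the translated point applies
    have hreg := hφ.2.1 (u + h) v k hnear
    rw [add_right_comm] at hreg
    calc _ ≤ ‖k‖ ^ γ * (1 + dist (u + h) v) ^ (-((d : ℝ) + β + γ)) := hreg
      _ ≤ ‖k‖ ^ γ * (2 ^ ((d : ℝ) + β + γ) * (1 + D) ^ (-((d : ℝ) + β + γ))) := by
          gcongr
          exact rpow_neg_le_mul_rpow_neg (by positivity) two_pos (by positivity) h2
      _ ≤ holTranslateConst d β γ * ‖k‖ ^ γ * (1 + D) ^ (-((d : ℝ) + β + γ)) := by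
          rw [mul_left_comm, ← mul_assoc]
          gcongr
          exact rpow_le_holTranslateConst one_le_two (by norm_num) (by positivity) (by linarith)
  · -- far from it `‖k‖` is comparable to `1 + D` and the size estimate suffices
    have hkD : 1 + D ≤ 4 * ‖k‖ := by linarith
    set M := 4 ^ ((d : ℝ) + β) * (1 + D) ^ (-((d : ℝ) + β)) with hM
    have hsize : ∀ w z : Euc d, ‖w‖ + ‖z‖ ≤ 1 + ‖k‖ → |φ (u + w) (v + z)| ≤ M := fun w z hwz =>
      hφ.abs_le_of_one_add_dist_le hβ hD <| by
        linarith [hdist w z, dist_nonneg (x := u + w) (y := v + z)]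
    have hxk := hsize (k + h) 0 (by rw [norm_zero, add_zero]; linarith [norm_add_le k h])
    have hyk := hsize h k (by linarith)
    have hxy := hsize h 0 (by rw [norm_zero]; linarith [norm_nonneg k])
    simp only [add_zero, ← add_assoc] at hxk hxy
    have hsplit : (1 + D) ^ (-((d : ℝ) + β)) =
        (1 + D) ^ γ * (1 + D) ^ (-((d : ℝ) + β + γ)) := by
      rw [← Real.rpow_add (by positivity)]; ring_nf
    have hx := abs_sub (φ (u + k + h) v) (φ (u + h) v)
    have hy := abs_sub (φ (u + h) (v + k)) (φ (u + h) v)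
    calc _ ≤ 4 * M := by linarith
      _ = 4 * 4 ^ ((d : ℝ) + β) * (1 + D) ^ γ * (1 + D) ^ (-((d : ℝ) + β + γ)) := by
          rw [hM, hsplit]; ring
      _ ≤ 4 * 4 ^ ((d : ℝ) + β) * (4 * ‖k‖) ^ γ * (1 + D) ^ (-((d : ℝ) + β + γ)) := by
          gcongr
      _ = holTranslateConst d β γ * ‖k‖ ^ γ * (1 + D) ^ (-((d : ℝ) + β + γ)) := by
          rw [holTranslateConst_eq, Real.mul_rpow (by norm_num) (norm_nonneg k)]
          ring

theorem translate (hφ : MemHol d γ β φ) (hβ : 0 ≤ β) (hγ : 0 ≤ γ) {h : Euc d} (hh : ‖h‖ ≤ 1) :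
    MemHol d γ β (fun u v => (holTranslateConst d β γ)⁻¹ * φ (u + h) v) := by
  have hC := holTranslateConst_pos d β γ
  refine ⟨fun u v => ?_, fun u v k hk => ?_, fun v => ?_, fun u => ?_⟩
  · have hD : 1 + dist u v ≤ 4 * (1 + dist (u + h) v) := by
      have := dist_triangle u (u + h) v
      rw [dist_self_add_right] at this
      linarith [dist_nonneg (x := u + h) (y := v)]
    have hsize := hφ.abs_le_of_one_add_dist_le hβ dist_nonneg hD
    have h4 : (4 : ℝ) ^ ((d : ℝ) + β) ≤ holTranslateConst d β γ :=
      rpow_le_holTranslateConst (by norm_num) le_rfl (by positivity) (by linarith)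
    rw [abs_mul, abs_inv, abs_of_pos hC, inv_mul_le_iff₀ hC]
    exact hsize.trans (by gcongr)
  · have hreg := hφ.regularity_translate hβ hγ hh hk
    simp only [← mul_sub, abs_mul, abs_inv, abs_of_pos hC, ← mul_add, inv_mul_le_iff₀ hC]
    linarith
  · rw [integral_const_mul, integral_add_right_eq_self (fun z => φ z v) h, hφ.2.2.1 v, mul_zero]
  · rw [integral_const_mul, hφ.2.2.2 (u + h), mul_zero]

end MemHol

theorem intrinsicA_le_mul_of_dist_le {d : ℕ} {β γ : ℝ} (hβ : 0 ≤ β) (hγ : 0 ≤ γ)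
    {X : Type*} [NormedAddCommGroup X] [NormedSpace ℝ X] (f : Euc d → X) {x y : Euc d} {t : ℝ}
    (hxy : dist x y ≤ t) :
    intrinsicA d γ β f (x, t) ≤
      ENNReal.ofReal (holTranslateConst d β γ) * intrinsicA d γ β f (y, t) := by
  have hC := holTranslateConst_pos d β γ
  have ht : 0 ≤ t := dist_nonneg.trans hxy
  refine iSup_le fun φ => ?_
  have hh : ‖t⁻¹ • x - t⁻¹ • y‖ ≤ 1 := by
    rw [← smul_sub, norm_smul, ← dist_eq_norm, Real.norm_eq_abs, abs_of_nonneg (inv_nonneg.2 ht)]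
    exact inv_mul_le_one_of_le₀ hxy ht
  let ψ : {φ : Euc d → Euc d → ℝ // MemHol d γ β φ} := ⟨_, φ.2.translate hβ hγ hh⟩
  have hint : ∫ z, ((t ^ d)⁻¹ * φ.1 (t⁻¹ • x) (t⁻¹ • z)) • f z =
      holTranslateConst d β γ • ∫ z, ((t ^ d)⁻¹ * ψ.1 (t⁻¹ • y) (t⁻¹ • z)) • f z := by
    rw [← integral_smul]
    congr 1 with z
    simp only [ψ, add_sub_cancel, smul_smul]
    congr 1
    field_simp
  calc (‖∫ z, ((t ^ d)⁻¹ * φ.1 (t⁻¹ • x) (t⁻¹ • z)) • f z‖₊ : ℝ≥0∞)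
      = ENNReal.ofReal (holTranslateConst d β γ) *
          ‖∫ z, ((t ^ d)⁻¹ * ψ.1 (t⁻¹ • y) (t⁻¹ • z)) • f z‖₊ := by
        rw [hint, ← enorm_eq_nnnorm, ← enorm_eq_nnnorm, enorm_smul, Real.enorm_of_nonneg hC.le]
    _ ≤ ENNReal.ofReal (holTranslateConst d β γ) * intrinsicA d γ β f (y, t) := by
        gcongr
        exact le_iSup (fun φ : {φ // MemHol d γ β φ} =>
          (‖∫ z, ((t ^ d)⁻¹ * φ.1 (t⁻¹ • y) (t⁻¹ • z)) • f z‖₊ : ℝ≥0∞)) ψ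

lemma ENNReal.min_one_le_rpow (a : ℝ≥0∞) {p : ℝ} (hp0 : 0 < p) (hp1 : p ≤ 1) :
    min a 1 ≤ a ^ p := by
  rcases le_total a 1 with ha | ha
  · simpa [min_eq_left ha] using ENNReal.rpow_le_rpow_of_exponent_ge ha hp1
  · simpa [min_eq_right ha] using ENNReal.one_le_rpow ha hp0

lemma ENNReal.rpow_le_max_one (a : ℝ≥0∞) {p : ℝ} (hp0 : 0 ≤ p) (hp1 : p ≤ 1) :
    a ^ p ≤ max a 1 := by
  rcases le_total a 1 with ha | ha
  · exact (ENNReal.rpow_le_one ha hp0).trans (le_max_right _ _)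
  · simpa [max_eq_left ha] using ENNReal.rpow_le_rpow_of_exponent_le ha hp1

section AreaVersusVertical

variable {d : ℕ} {q : ℝ}

lemma setLIntegral_ball_const_div_pow_succ (x : Euc d) {t : ℝ} (ht : 0 < t) (c : ℝ≥0∞) :
    (∫⁻ _ in ball x t, c) / ENNReal.ofReal (t ^ (d + 1)) =
      volume (ball (0 : Euc d) 1) * (c / ENNReal.ofReal t) := by
  have hpos : ENNReal.ofReal (t ^ d) ≠ 0 := (ENNReal.ofReal_pos.2 (by positivity)).ne'
  rw [setLIntegral_const, Measure.addHaar_ball_of_pos volume x ht, finrank_euclideanSpace_fin,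
    pow_succ, ENNReal.ofReal_mul (by positivity), mul_left_comm,
    ENNReal.mul_div_mul_left _ _ hpos ENNReal.ofReal_ne_top, mul_comm, mul_div_assoc]

lemma GqE_const_mul (hq : 0 < q) {c : ℝ≥0∞} (hc : c ≠ ⊤) (u : Euc d × ℝ → ℝ≥0∞)
    (x : Euc d) : GqE d q (fun p => c * u p) x = c * GqE d q u x := by
  simp only [GqE, ENNReal.mul_rpow_of_nonneg _ _ hq.le, mul_div_assoc]
  rw [lintegral_const_mul' _ _ (ENNReal.rpow_ne_top_of_nonneg hq.le hc),
    ENNReal.mul_rpow_of_nonneg _ _ (by positivity), ← ENNReal.rpow_mul, mul_one_div_cancel hq.ne',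
    ENNReal.rpow_one]

lemma AqE_le_rpow_mul_GqE (hq : 0 < q) {u v : Euc d × ℝ → ℝ≥0∞} {x : Euc d}
    (huv : ∀ t, ∀ y ∈ ball x t, u (y, t) ≤ v (x, t)) :
    AqE d q u x ≤ volume (ball (0 : Euc d) 1) ^ (1 / q) * GqE d q v x := by
  rw [AqE, GqE, ← ENNReal.mul_rpow_of_nonneg _ _ (by positivity),
    ← lintegral_const_mul' _ _ measure_ball_lt_top.ne]
  gcongr ?_ ^ _
  refine setLIntegral_mono' measurableSet_Ioi fun t ht => ?_
  rw [← setLIntegral_ball_const_div_pow_succ x ht]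
  gcongr ?_ / _
  exact setLIntegral_mono' measurableSet_ball fun y hy =>
    ENNReal.rpow_le_rpow (huv t y hy) hq.le

lemma rpow_mul_GqE_le_AqE (hq : 0 < q) {u v : Euc d × ℝ → ℝ≥0∞} {x : Euc d}
    (hvu : ∀ t, ∀ y ∈ ball x t, v (x, t) ≤ u (y, t)) :
    volume (ball (0 : Euc d) 1) ^ (1 / q) * GqE d q v x ≤ AqE d q u x := by
  rw [AqE, GqE, ← ENNReal.mul_rpow_of_nonneg _ _ (by positivity),
    ← lintegral_const_mul' _ _ measure_ball_lt_top.ne]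
  gcongr ?_ ^ _
  refine setLIntegral_mono' measurableSet_Ioi fun t ht => ?_
  rw [← setLIntegral_ball_const_div_pow_succ x ht]
  gcongr ?_ / _
  exact setLIntegral_mono' measurableSet_ball fun y hy =>
    ENNReal.rpow_le_rpow (hvu t y hy) hq.le

end AreaVersusVertical

/-- Pointwise equivalence of the intrinsic area function
`S_{q,γ,β}` and the intrinsic `g`-function `G_{q,γ,β}`, with constants depending
only on `d, γ, β`. -/
theorem intrinsic_area_vs_g_pointwise :
    ∀ d : ℕ, 1 ≤ d →
    ∀ β γ : ℝ, 0 < β → β ≤ 1 → 0 < γ → γ ≤ 1 →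
    ∃ c₁ c₂ : ℝ, 0 < c₁ ∧ 0 < c₂ ∧
      ∀ (X : Type u) [NormedAddCommGroup X] [NormedSpace ℝ X] [CompleteSpace X],
      ∀ q : ℝ, 1 < q →
      ∀ f : Euc d → X, IsCcTensor d f →
      ∀ x : Euc d,
        ENNReal.ofReal c₁ * GqE d q (intrinsicA d γ β f) x ≤
          AqE d q (intrinsicA d γ β f) x ∧
        AqE d q (intrinsicA d γ β f) x ≤
          ENNReal.ofReal c₂ * GqE d q (intrinsicA d γ β f) x := by
  intro d _ β γ hβ _ hγ _
  set C := ENNReal.ofReal (holTranslateConst d β γ)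
  set V := volume (ball (0 : Euc d) 1)
  have hC0 : C ≠ 0 := (ENNReal.ofReal_pos.2 (holTranslateConst_pos d β γ)).ne'
  have hCtop : C ≠ ⊤ := ENNReal.ofReal_ne_top
  have hV0 : V ≠ 0 := (measure_ball_pos volume _ one_pos).ne'
  have hVtop : V ≠ ⊤ := measure_ball_lt_top.ne
  have hc₁ : C⁻¹ * min V 1 ≠ ⊤ := by simp [hC0, ENNReal.mul_eq_top]
  have hc₂ : C * max V 1 ≠ ⊤ := by simp [hCtop, hVtop, ENNReal.mul_eq_top]
  refine ⟨(C⁻¹ * min V 1).toReal, (C * max V 1).toReal,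
    ENNReal.toReal_pos (by simp [hCtop, hV0]) hc₁, ENNReal.toReal_pos (by simp [hC0]) hc₂, ?_⟩
  intro X _ _ _ q hq f _ x
  have hq0 : 0 < q := one_pos.trans hq
  have hexp : 1 / q ≤ 1 := (div_le_one hq0).2 hq.le
  rw [ENNReal.ofReal_toReal hc₁, ENNReal.ofReal_toReal hc₂]
  constructor
  · calc C⁻¹ * min V 1 * GqE d q (intrinsicA d γ β f) x
        ≤ V ^ (1 / q) * GqE d q (fun p => C⁻¹ * intrinsicA d γ β f p) x := by
          rw [GqE_const_mul hq0 (ENNReal.inv_ne_top.2 hC0), mul_left_comm, ← mul_assoc]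
          gcongr
          exact ENNReal.min_one_le_rpow V (by positivity) hexp
      _ ≤ AqE d q (intrinsicA d γ β f) x := rpow_mul_GqE_le_AqE hq0 fun _ _ hy =>
          (ENNReal.inv_mul_le_iff hC0 hCtop).2 <|
            intrinsicA_le_mul_of_dist_le hβ.le hγ.le f (mem_ball'.1 hy).le
  · calc AqE d q (intrinsicA d γ β f) x
        ≤ V ^ (1 / q) * GqE d q (fun p => C * intrinsicA d γ β f p) x :=
          AqE_le_rpow_mul_GqE hq0 fun _ _ hy =>
            intrinsicA_le_mul_of_dist_le hβ.le hγ.le f (mem_ball.1 hy).le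
      _ ≤ C * max V 1 * GqE d q (intrinsicA d γ β f) x := by
          rw [GqE_const_mul hq0 hCtop, mul_left_comm, ← mul_assoc]
          gcongr
          exact ENNReal.rpow_le_max_one V (by positivity) hexp
end
end

section
/- Let d ≥ 1 and 0 < β, γ ≤ 1, and let k(t,x,y) be a kernel such that C_k^{−1}(k(t,·,·))_{t^{−1}} ∈ H_{γ,β} for some constant C_k > 0 and all t > 0, and such that ∫_{ℝ^d} k(s,z,w)dz = 0 for all s > 0 and w ∈ ℝ^d. For θ ∈ H_{γ,β} define Λ^θ_{t,s}(y,w) = ∫_{ℝ^d} θ_t(y,z) k(s,z,w) dz. Set ν = min{γ,β}/2 and ζ = (d + β/2)/(d + β). Then sup_{θ ∈ H_{γ,β}} |Λ^θ_{t,s}(y,w)| ≤ C · min{s/t, t/s}^{(1−ζ)ν} · min{1/t, 1/s}^d / (1 + min{1/t, 1/s}|y−w|)^{d + β/2} for all t,s > 0 and y,w ∈ ℝ^d, where C > 0 depends only on d, γ, β and C_k. -/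
open MeasureTheory ENNReal Real Set Metric

noncomputable section

/-!
Both factors of the integrand are dilates of kernels in `H_{γ,β}`: `θ_t(y, ·)` at scale `t` and
`k(s, ·, w) = C_k (κ_s)_s(·, w)` at scale `s`, where `κ_s = C_k⁻¹ (k(s, ·, ·))_{s⁻¹}`. Call `f`
the factor at the finer scale `σ = min t s` (centred at `p`) and `g` the one at the coarser scale
`M = max t s` (centred at `c`). As `∫ f = 0`, `∫ f g = ∫ f (g - g p)`. Near `p`, i.e. where
`2|z - p| ≤ M + |p - c|`, the Hölder bound of `g` gains `(σ/M)^ν` at the cost of `ν` orders of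
decay of `f`; away from `p`, `f` is small, and sacrificing `β/2` of its decay (against `g p`) or
all of it (against `g z`) gains the same factor. Hence
`|∫ f g| ≲ (σ/M)^ν M^β (M + |p - c|)^{-d-β}`, and weakening the decay to `d + β/2` gives the
stated form.
-/

lemma min_inv_inv_of_pos {α : Type*} [Field α] [LinearOrder α] [IsStrictOrderedRing α] {a b : α}
    (ha : 0 < a) (hb : 0 < b) : min a⁻¹ b⁻¹ = (max a b)⁻¹ := by
  rcases le_total a b with h | h
  · rw [max_eq_right h, min_eq_right (inv_anti₀ ha h)]
  · rw [max_eq_left h, min_eq_left (inv_anti₀ hb h)]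

lemma min_div_div_le_one {α : Type*} [Field α] [LinearOrder α] [IsStrictOrderedRing α] {a b : α}
    (ha : 0 < a) (hb : 0 < b) : min (a / b) (b / a) ≤ 1 := by
  rcases le_total a b with h | h
  · exact min_le_of_left_le ((div_le_one hb).2 h)
  · exact min_le_of_right_le ((div_le_one ha).2 h)

theorem continuousAt_of_locally_holder {α β : Type*} [PseudoMetricSpace α] [PseudoMetricSpace β]
    {f : α → β} {x : α} {r γ : ℝ} (hr : 0 < r) (hγ : 0 < γ)
    (h : ∀ y, dist y x < r → dist (f y) (f x) ≤ dist y x ^ γ) : ContinuousAt f x := by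
  refine tendsto_iff_dist_tendsto_zero.2 (squeeze_zero' (Filter.Eventually.of_forall
    fun _ => dist_nonneg) (Filter.mem_of_superset (ball_mem_nhds _ hr) h) ?_)
  exact Continuous.tendsto' (by fun_prop (disch := exact hγ.le)) x 0 (by simp [hγ.ne'])

/-- Size bound at distance `r` of a kernel of `H_{γ,a}` dilated to scale `t`
(see `kernelProfile_eq`). -/
def kernelProfile (d : ℕ) (a t r : ℝ) : ℝ := t ^ a * (t + r) ^ (-((d : ℝ) + a))

def profileMass (d : ℕ) (a : ℝ) : ℝ := ∫ z : Euc d, kernelProfile d a 1 ‖z‖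

section kernelProfile

variable {d : ℕ} {a t r : ℝ}

lemma kernelProfile_nonneg (ht : 0 ≤ t) (hr : 0 ≤ r) : 0 ≤ kernelProfile d a t r := by
  unfold kernelProfile; positivity

lemma kernelProfile_mul_rpow (b : ℝ) (ht : 0 < t) (hr : 0 ≤ r) :
    kernelProfile d a t r * ((t + r) / t) ^ b = kernelProfile d (a - b) t r := by
  have htr : 0 < t + r := by linarith
  unfold kernelProfile
  rw [div_rpow htr.le ht.le, rpow_sub ht, show -((d : ℝ) + (a - b)) = -((d : ℝ) + a) + b by ring,
    rpow_add htr]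
  field_simp

lemma kernelProfile_anti {a' : ℝ} (ha : a' ≤ a) (ht : 0 < t) (hr : 0 ≤ r) :
    kernelProfile d a t r ≤ kernelProfile d a' t r := by
  rw [← sub_sub_cancel a a', ← kernelProfile_mul_rpow _ ht hr]
  refine le_mul_of_one_le_right (kernelProfile_nonneg ht.le hr) (one_le_rpow ?_ (by linarith))
  rw [le_div_iff₀ ht]; linarith

lemma kernelProfile_eq (ht : 0 < t) (hr : 0 ≤ r) :
    kernelProfile d a t r = (t ^ d)⁻¹ * kernelProfile d a 1 (t⁻¹ * r) := by
  have h1 : t + r = t * (1 + t⁻¹ * r) := by field_simp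
  unfold kernelProfile
  rw [h1, mul_rpow ht.le (by positivity), Real.one_rpow, one_mul, ← mul_assoc, ← rpow_add ht,
    show a + -((d : ℝ) + a) = -(d : ℝ) by ring, rpow_neg ht.le, Real.rpow_natCast]

lemma kernelProfile_eq_div (ht : 0 < t) (hr : 0 ≤ r) :
    kernelProfile d a t r = t⁻¹ ^ (d : ℝ) / (1 + t⁻¹ * r) ^ ((d : ℝ) + a) := by
  rw [kernelProfile_eq ht hr, kernelProfile, Real.one_rpow, one_mul, rpow_neg (by positivity),
    Real.rpow_natCast, inv_pow, div_eq_mul_inv]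

lemma integrable_kernelProfile (ha : 0 < a) (ht : 0 < t) (p : Euc d) :
    Integrable fun z : Euc d => kernelProfile d a t (dist z p) := by
  have hbase : Integrable fun z : Euc d => kernelProfile d a 1 ‖z‖ := by
    simp only [kernelProfile, Real.one_rpow, one_mul]
    exact integrable_one_add_norm (by simp; linarith)
  have hscaled := ((hbase.comp_smul (inv_ne_zero ht.ne')).comp_sub_right p).const_mul (t ^ d)⁻¹
  refine hscaled.congr (Filter.Eventually.of_forall fun z => ?_)
  simp only [dist_eq_norm, norm_smul, norm_inv, Real.norm_of_nonneg ht.le]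
  exact (kernelProfile_eq ht (norm_nonneg _)).symm

lemma integral_kernelProfile (ht : 0 < t) (p : Euc d) :
    ∫ z : Euc d, kernelProfile d a t (dist z p) = profileMass d a := by
  have hscale := Measure.integral_comp_inv_smul_of_nonneg volume
    (fun z : Euc d => kernelProfile d a 1 ‖z‖) ht.le
  rw [finrank_euclideanSpace_fin] at hscale
  have hnorm : ∀ z : Euc d, ‖t⁻¹ • z‖ = t⁻¹ * ‖z‖ := fun z => by
    rw [norm_smul, norm_inv, Real.norm_of_nonneg ht.le]
  simp only [hnorm] at hscale
  simp only [dist_eq_norm]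
  rw [integral_sub_right_eq_self (fun z : Euc d => kernelProfile d a t ‖z‖) p]
  simp only [kernelProfile_eq ht (norm_nonneg _)]
  rw [integral_const_mul, hscale, smul_eq_mul, inv_mul_cancel_left₀ (by positivity), profileMass]

end kernelProfile

/-- `dilate t φ` is the paper's `φ_t`. -/
def dilate {d : ℕ} (t : ℝ) (φ : Euc d → Euc d → ℝ) : Euc d → Euc d → ℝ :=
  fun x y => (t ^ d)⁻¹ * φ (t⁻¹ • x) (t⁻¹ • y)

lemma mul_dilate_rescale {d : ℕ} {C s : ℝ} (hC : C ≠ 0) (hs : s ≠ 0) (K : Euc d → Euc d → ℝ)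
    (x y : Euc d) : C * dilate s (fun x y => C⁻¹ * (s ^ d * K (s • x) (s • y))) x y = K x y := by
  simp only [dilate, smul_inv_smul₀ hs]
  field_simp

namespace MemHol

variable {d : ℕ} {γ β : ℝ} {φ : Euc d → Euc d → ℝ}

lemma swap (hφ : MemHol d γ β φ) : MemHol d γ β (Function.swap φ) := by
  obtain ⟨hsize, hreg, hint₁, hint₂⟩ := hφ
  refine ⟨fun x y => ?_, fun x y h hh => ?_, hint₂, hint₁⟩
  · simpa only [Function.swap, dist_comm] using hsize y x
  · rw [dist_comm] at hh ⊢
    simpa only [Function.swap, add_comm] using hreg y x h hh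

lemma abs_sub_le_left (hφ : MemHol d γ β φ) {x y h : Euc d} (hh : 2 * ‖h‖ ≤ 1 + dist x y) :
    |φ (x + h) y - φ x y| ≤
      (‖h‖ / (1 + dist x y)) ^ γ * (1 + dist x y) ^ (-((d : ℝ) + β)) := by
  have hpos : 0 < 1 + dist x y := by positivity
  have hsplit : ‖h‖ ^ γ * (1 + dist x y) ^ (-((d : ℝ) + β + γ)) =
      (‖h‖ / (1 + dist x y)) ^ γ * (1 + dist x y) ^ (-((d : ℝ) + β)) := by
    rw [div_rpow (norm_nonneg _) hpos.le, show -((d : ℝ) + β + γ) = -γ + -((d : ℝ) + β) by ring,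
      rpow_add hpos, rpow_neg hpos.le]
    ring
  linarith [hφ.2.1 x y h hh, abs_nonneg (φ x (y + h) - φ x y)]

lemma continuous_left (hφ : MemHol d γ β φ) (hβ : 0 ≤ β) (hγ : 0 < γ) (y : Euc d) :
    Continuous fun x => φ x y := by
  refine continuous_iff_continuousAt.2 fun x => continuousAt_of_locally_holder (r := 2⁻¹)
    (by norm_num) hγ fun x' hx' => ?_
  have hpos : 1 ≤ 1 + dist x y := by linarith [dist_nonneg (x := x) (y := y)]
  have hh : 2 * ‖x' - x‖ ≤ 1 + dist x y := by rw [← dist_eq_norm]; linarith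
  have hbound := hφ.abs_sub_le_left hh
  rw [add_sub_cancel] at hbound
  rw [Real.dist_eq, dist_eq_norm]
  refine hbound.trans ?_
  calc (‖x' - x‖ / (1 + dist x y)) ^ γ * (1 + dist x y) ^ (-((d : ℝ) + β))
      ≤ ‖x' - x‖ ^ γ * 1 := by
        gcongr
        · exact div_le_self (norm_nonneg _) hpos
        · exact rpow_le_one_of_one_le_of_nonpos hpos (by linarith [(Nat.cast_nonneg d : (0:ℝ) ≤ d)])
    _ = ‖x' - x‖ ^ γ := mul_one _

variable {t : ℝ}

lemma abs_dilate_le (hφ : MemHol d γ β φ) (ht : 0 < t) (x y : Euc d) :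
    |dilate t φ x y| ≤ kernelProfile d β t (dist x y) := by
  rw [kernelProfile_eq ht dist_nonneg, dilate, abs_mul, abs_of_pos (by positivity)]
  gcongr
  simpa [kernelProfile, dist_smul₀, abs_of_pos ht] using hφ.1 (t⁻¹ • x) (t⁻¹ • y)

lemma abs_dilate_sub_le (hφ : MemHol d γ β φ) (ht : 0 < t) {x x' y : Euc d}
    (hx : 2 * dist x' x ≤ t + dist x y) :
    |dilate t φ x' y - dilate t φ x y| ≤
      (dist x' x / (t + dist x y)) ^ γ * kernelProfile d β t (dist x y) := by
  have hscale : ∀ a b : Euc d, dist (t⁻¹ • a) (t⁻¹ • b) = t⁻¹ * dist a b := fun a b => by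
    rw [dist_smul₀, norm_inv, Real.norm_of_nonneg ht.le]
  have hh : 2 * ‖t⁻¹ • x' - t⁻¹ • x‖ ≤ 1 + dist (t⁻¹ • x) (t⁻¹ • y) := by
    rw [← dist_eq_norm, hscale, hscale, ← inv_mul_cancel₀ ht.ne', ← mul_add, mul_left_comm]
    gcongr
  have hbound := hφ.abs_sub_le_left hh
  rw [add_sub_cancel, ← dist_eq_norm, hscale, hscale,
    show t⁻¹ * dist x' x / (1 + t⁻¹ * dist x y) = dist x' x / (t + dist x y) by
      field_simp] at hbound
  rw [kernelProfile_eq ht dist_nonneg, dilate, dilate, ← mul_sub, abs_mul,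
    abs_of_pos (by positivity), mul_left_comm]
  gcongr
  simpa [kernelProfile] using hbound

lemma integral_dilate_eq_zero (hφ : MemHol d γ β φ) (ht : 0 < t) (y : Euc d) :
    ∫ x, dilate t φ x y = 0 := by
  simp only [dilate]
  rw [integral_const_mul, Measure.integral_comp_inv_smul_of_nonneg volume
    (fun x => φ x (t⁻¹ • y)) ht.le, hφ.2.2.1, smul_zero, mul_zero]

lemma continuous_dilate (hφ : MemHol d γ β φ) (hβ : 0 ≤ β) (hγ : 0 < γ) (t : ℝ) (y : Euc d) :
    Continuous fun x => dilate t φ x y :=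
  continuous_const.mul ((hφ.continuous_left hβ hγ _).comp (continuous_const_smul t⁻¹))

end MemHol

def almostOrthConst (d : ℕ) (β ν : ℝ) : ℝ :=
  profileMass d (β - ν) + 2 ^ (β / 2) * profileMass d (β / 2) +
    2 ^ ((d : ℝ) + β) * profileMass d β

lemma almostOrthConst_nonneg (d : ℕ) (β ν : ℝ) : 0 ≤ almostOrthConst d β ν := by
  have hmass : ∀ a, 0 ≤ profileMass d a := fun a =>
    integral_nonneg fun z => kernelProfile_nonneg zero_le_one (norm_nonneg z)
  unfold almostOrthConst
  have := hmass (β - ν); have := hmass (β / 2); have := hmass β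
  positivity

section AlmostOrthogonality

variable {d : ℕ} {β γ ν σ M q r : ℝ}

lemma kernelProfile_mul_holder_le (hσ : 0 < σ) (hσM : σ ≤ M) (hq : 0 ≤ q) (hr : 0 ≤ r)
    (hqD : q ≤ M + r) (hν : 0 ≤ ν) (hνγ : ν ≤ γ) :
    kernelProfile d β σ q * ((q / (M + r)) ^ γ * kernelProfile d β M r) ≤
      (σ / M) ^ ν * kernelProfile d β M r * kernelProfile d (β - ν) σ q := by
  have hM : 0 < M := hσ.trans_le hσM
  have hratio : (q / (M + r)) ^ γ ≤ ((σ + q) / M) ^ ν := calc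
    (q / (M + r)) ^ γ ≤ (q / (M + r)) ^ ν :=
      rpow_le_rpow_of_exponent_ge' (by positivity) ((div_le_one (by positivity)).2 hqD) hν hνγ
    _ ≤ ((σ + q) / M) ^ ν := by gcongr <;> linarith
  rw [← kernelProfile_mul_rpow ν hσ hq]
  calc kernelProfile d β σ q * ((q / (M + r)) ^ γ * kernelProfile d β M r)
      ≤ kernelProfile d β σ q * (((σ + q) / M) ^ ν * kernelProfile d β M r) := by
        gcongr
        all_goals exact kernelProfile_nonneg (by linarith) (by linarith)
    _ = (σ / M) ^ ν * kernelProfile d β M r * (kernelProfile d β σ q * ((σ + q) / σ) ^ ν) := by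
        rw [show (σ + q) / M = σ / M * ((σ + q) / σ) by field_simp,
          mul_rpow (by positivity) (by positivity)]
        ring

lemma kernelProfile_mul_kernelProfile_le (hσ : 0 < σ) (hσM : σ ≤ M) (hq : 0 ≤ q) (hr : 0 ≤ r)
    (hqD : M + r < 2 * q) (hβ : 0 ≤ β) (hνβ : 2 * ν ≤ β) :
    kernelProfile d β σ q * kernelProfile d β M r ≤
      (σ / M) ^ ν * kernelProfile d β M r * (2 ^ (β / 2) * kernelProfile d (β / 2) σ q) := by
  have hM : 0 < M := hσ.trans_le hσM
  have hgain : 1 ≤ 2 ^ (β / 2) * (σ / M) ^ ν * ((σ + q) / σ) ^ (β / 2) := calc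
    (1 : ℝ) ≤ (2 * ((σ + q) / M)) ^ (β / 2) :=
      one_le_rpow (by rw [mul_div_assoc', le_div_iff₀ hM]; linarith) (by linarith)
    _ = 2 ^ (β / 2) * (σ / M) ^ (β / 2) * ((σ + q) / σ) ^ (β / 2) := by
      rw [← mul_rpow (by norm_num) (by positivity), ← mul_rpow (by positivity) (by positivity)]
      congr 1
      field_simp
    _ ≤ 2 ^ (β / 2) * (σ / M) ^ ν * ((σ + q) / σ) ^ (β / 2) := by
      have hdecrease : (σ / M) ^ (β / 2) ≤ (σ / M) ^ ν :=
        rpow_le_rpow_of_exponent_ge (by positivity) ((div_le_one hM).2 hσM) (by linarith)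
      gcongr
  have hP := kernelProfile_mul_rpow (d := d) (a := β) (β / 2) hσ hq
  rw [show β - β / 2 = β / 2 by ring] at hP
  rw [← hP]
  have hnn := mul_nonneg (kernelProfile_nonneg (d := d) (a := β) hσ.le hq)
    (kernelProfile_nonneg (d := d) (a := β) hM.le hr)
  calc kernelProfile d β σ q * kernelProfile d β M r
      ≤ kernelProfile d β σ q * kernelProfile d β M r *
          (2 ^ (β / 2) * (σ / M) ^ ν * ((σ + q) / σ) ^ (β / 2)) := le_mul_of_one_le_right hnn hgain
    _ = _ := by ring

lemma kernelProfile_le_of_lt (hσ : 0 < σ) (hσM : σ ≤ M) (hr : 0 ≤ r) (hqD : M + r < 2 * q)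
    (hβ : 0 ≤ β) (hνβ : ν ≤ β) :
    kernelProfile d β σ q ≤ 2 ^ ((d : ℝ) + β) * ((σ / M) ^ ν * kernelProfile d β M r) := by
  have hM : 0 < M := hσ.trans_le hσM
  have hdβ : 0 ≤ (d : ℝ) + β := by positivity
  have hdecay : (σ + q) ^ (-((d : ℝ) + β)) ≤ 2 ^ ((d : ℝ) + β) * (M + r) ^ (-((d : ℝ) + β)) := calc
    (σ + q) ^ (-((d : ℝ) + β)) ≤ ((M + r) / 2) ^ (-((d : ℝ) + β)) :=
      rpow_le_rpow_of_nonpos (by positivity) (by linarith) (by linarith)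
    _ = 2 ^ ((d : ℝ) + β) * (M + r) ^ (-((d : ℝ) + β)) := by
      rw [div_rpow (by positivity) (by norm_num), Real.rpow_neg (by norm_num : (0 : ℝ) ≤ 2),
        div_inv_eq_mul, mul_comm]
  have hscale : σ ^ β ≤ (σ / M) ^ ν * M ^ β := calc
    σ ^ β = (σ / M) ^ β * M ^ β := by
      rw [← mul_rpow (by positivity) hM.le, div_mul_cancel₀ _ hM.ne']
    _ ≤ (σ / M) ^ ν * M ^ β := mul_le_mul_of_nonneg_right
      (rpow_le_rpow_of_exponent_ge (by positivity) ((div_le_one hM).2 hσM) hνβ) (by positivity)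
  unfold kernelProfile
  calc σ ^ β * (σ + q) ^ (-((d : ℝ) + β))
      ≤ ((σ / M) ^ ν * M ^ β) * (2 ^ ((d : ℝ) + β) * (M + r) ^ (-((d : ℝ) + β))) :=
        mul_le_mul hscale hdecay (rpow_nonneg (by linarith) _) (by positivity)
    _ = _ := by ring

variable {p c : Euc d} {f g : Euc d → ℝ}

lemma abs_mul_sub_le_of_kernelProfile_bounds (hσ : 0 < σ) (hσM : σ ≤ M) (hν : 0 ≤ ν)
    (hνγ : ν ≤ γ) (hνβ : 2 * ν ≤ β)
    (hf : ∀ z, |f z| ≤ kernelProfile d β σ (dist z p))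
    (hg : ∀ z, |g z| ≤ kernelProfile d β M (dist z c))
    (hg_reg : ∀ z, 2 * dist z p ≤ M + dist p c →
      |g z - g p| ≤ (dist z p / (M + dist p c)) ^ γ * kernelProfile d β M (dist p c))
    (z : Euc d) :
    |f z * (g z - g p)| ≤ (σ / M) ^ ν * kernelProfile d β M (dist p c) *
      (kernelProfile d (β - ν) σ (dist z p) + 2 ^ (β / 2) * kernelProfile d (β / 2) σ (dist z p) +
        2 ^ ((d : ℝ) + β) * kernelProfile d β M (dist z c)) := by
  have hM : 0 < M := hσ.trans_le hσM
  set X := (σ / M) ^ ν * kernelProfile d β M (dist p c)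
  have hX : 0 ≤ X := mul_nonneg (by positivity) (kernelProfile_nonneg hM.le dist_nonneg)
  have hPσ : ∀ a, 0 ≤ kernelProfile d a σ (dist z p) := fun _ =>
    kernelProfile_nonneg hσ.le dist_nonneg
  have hPM : 0 ≤ kernelProfile d β M (dist z c) := kernelProfile_nonneg hM.le dist_nonneg
  have hS : 0 ≤ 2 ^ (β / 2) * kernelProfile d (β / 2) σ (dist z p) +
      2 ^ ((d : ℝ) + β) * kernelProfile d β M (dist z c) :=
    add_nonneg (mul_nonneg (by positivity) (hPσ _)) (mul_nonneg (by positivity) hPM)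
  rw [abs_mul]
  by_cases hnear : 2 * dist z p ≤ M + dist p c
  · calc |f z| * |g z - g p|
        ≤ kernelProfile d β σ (dist z p) *
            ((dist z p / (M + dist p c)) ^ γ * kernelProfile d β M (dist p c)) :=
          mul_le_mul (hf z) (hg_reg z hnear) (abs_nonneg _) (hPσ β)
      _ ≤ X * kernelProfile d (β - ν) σ (dist z p) :=
          kernelProfile_mul_holder_le hσ hσM dist_nonneg dist_nonneg
            (by linarith [dist_nonneg (x := z) (y := p)]) hν hνγ
      _ ≤ _ := mul_le_mul_of_nonneg_left (by linarith) hX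
  · rw [not_le] at hnear
    have hfar := kernelProfile_le_of_lt (d := d) (β := β) (ν := ν) hσ hσM dist_nonneg hnear
      (by linarith) (by linarith)
    calc |f z| * |g z - g p|
        ≤ kernelProfile d β σ (dist z p) *
            (kernelProfile d β M (dist z c) + kernelProfile d β M (dist p c)) :=
          mul_le_mul (hf z) ((abs_sub _ _).trans (add_le_add (hg z) (hg p))) (abs_nonneg _)
            (hPσ β)
      _ ≤ 2 ^ ((d : ℝ) + β) * X * kernelProfile d β M (dist z c) +
            X * (2 ^ (β / 2) * kernelProfile d (β / 2) σ (dist z p)) := by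
          rw [mul_add]
          exact add_le_add ((mul_le_mul_of_nonneg_right hfar hPM).trans_eq (by ring))
            (kernelProfile_mul_kernelProfile_le hσ hσM dist_nonneg dist_nonneg hnear
              (by linarith) hνβ)
      _ = X * (2 ^ (β / 2) * kernelProfile d (β / 2) σ (dist z p) +
            2 ^ ((d : ℝ) + β) * kernelProfile d β M (dist z c)) := by ring
      _ ≤ _ := mul_le_mul_of_nonneg_left (by linarith [hPσ (β - ν)]) hX

lemma abs_integral_mul_le_of_kernelProfile_bounds (hσ : 0 < σ) (hσM : σ ≤ M) (hν : 0 < ν)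
    (hνγ : ν ≤ γ) (hνβ : 2 * ν ≤ β) (hf_meas : AEStronglyMeasurable f)
    (hg_meas : AEStronglyMeasurable g)
    (hf_mean : ∫ z, f z = 0)
    (hf : ∀ z, |f z| ≤ kernelProfile d β σ (dist z p))
    (hg : ∀ z, |g z| ≤ kernelProfile d β M (dist z c))
    (hg_reg : ∀ z, 2 * dist z p ≤ M + dist p c →
      |g z - g p| ≤ (dist z p / (M + dist p c)) ^ γ * kernelProfile d β M (dist p c)) :
    |∫ z, f z * g z| ≤
      almostOrthConst d β ν * ((σ / M) ^ ν * kernelProfile d β M (dist p c)) := by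
  have hM : 0 < M := hσ.trans_le hσM
  have hβ : 0 < β := by linarith
  set X := (σ / M) ^ ν * kernelProfile d β M (dist p c)
  set S := fun z => kernelProfile d (β - ν) σ (dist z p) +
    2 ^ (β / 2) * kernelProfile d (β / 2) σ (dist z p) +
      2 ^ ((d : ℝ) + β) * kernelProfile d β M (dist z c)
  have h₁ := integrable_kernelProfile (d := d) (a := β - ν) (by linarith) hσ p
  have h₂ := integrable_kernelProfile (d := d) (a := β / 2) (by linarith) hσ p
  have h₃ := integrable_kernelProfile (d := d) hβ hM c
  have h₁₂ : Integrable fun z => kernelProfile d (β - ν) σ (dist z p) +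
      2 ^ (β / 2) * kernelProfile d (β / 2) σ (dist z p) := h₁.add (h₂.const_mul _)
  have hS_int : Integrable S := h₁₂.add (h₃.const_mul _)
  have hS_integral : ∫ z, S z = almostOrthConst d β ν := by
    rw [integral_add h₁₂ (h₃.const_mul _), integral_add h₁ (h₂.const_mul _), integral_const_mul,
      integral_const_mul, integral_kernelProfile hσ, integral_kernelProfile hσ,
      integral_kernelProfile hM, almostOrthConst]
  have hpt := abs_mul_sub_le_of_kernelProfile_bounds hσ hσM hν.le hνγ hνβ hf hg hg_reg
  have hf_int : Integrable f :=
    (integrable_kernelProfile hβ hσ p).mono' hf_meas (Filter.Eventually.of_forall hf)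
  have hdiff_int : Integrable fun z => f z * (g z - g p) :=
    (hS_int.const_mul X).mono' (hf_meas.mul (hg_meas.sub aestronglyMeasurable_const))
      (Filter.Eventually.of_forall hpt)
  have hcancel : ∫ z, f z * g z = ∫ z, f z * (g z - g p) := by
    have hsplit : (fun z => f z * g z) = fun z => f z * (g z - g p) + f z * g p := by
      ext z; ring
    rw [hsplit, integral_add hdiff_int (hf_int.mul_const _), integral_mul_const, hf_mean,
      zero_mul, add_zero]
  calc |∫ z, f z * g z| ≤ ∫ z, |f z * (g z - g p)| := hcancel ▸ abs_integral_le_integral_abs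
    _ ≤ ∫ z, X * S z := integral_mono hdiff_int.abs (hS_int.const_mul X) hpt
    _ = almostOrthConst d β ν * X := by rw [integral_const_mul, hS_integral, mul_comm]

end AlmostOrthogonality

namespace MemHol

variable {d : ℕ} {γ β ν t s : ℝ} {φ ψ : Euc d → Euc d → ℝ}

lemma abs_integral_dilate_mul_dilate_le_of_le (hφ : MemHol d γ β φ) (hψ : MemHol d γ β ψ)
    (hν : 0 < ν) (hνγ : ν ≤ γ) (hνβ : 2 * ν ≤ β) (ht : 0 < t) (hts : t ≤ s) (y w : Euc d) :
    |∫ z, dilate t φ z y * dilate s ψ z w| ≤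
      almostOrthConst d β ν * ((t / s) ^ ν * kernelProfile d β s (dist y w)) := by
  have hs := ht.trans_le hts
  have hβ : 0 ≤ β := by linarith
  have hγ : 0 < γ := hν.trans_le hνγ
  exact abs_integral_mul_le_of_kernelProfile_bounds ht hts hν hνγ hνβ
    (hφ.continuous_dilate hβ hγ t y).aestronglyMeasurable
    (hψ.continuous_dilate hβ hγ s w).aestronglyMeasurable
    (hφ.integral_dilate_eq_zero ht y) (fun z => hφ.abs_dilate_le ht z y)
    (fun z => hψ.abs_dilate_le hs z w) (fun z hz => hψ.abs_dilate_sub_le hs hz)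

lemma abs_integral_dilate_mul_dilate_le (hφ : MemHol d γ β φ) (hψ : MemHol d γ β ψ)
    (hν : 0 < ν) (hνγ : ν ≤ γ) (hνβ : 2 * ν ≤ β) (ht : 0 < t) (hs : 0 < s) (y w : Euc d) :
    |∫ z, dilate t φ z y * dilate s ψ z w| ≤ almostOrthConst d β ν *
      (min (s / t) (t / s) ^ ν * kernelProfile d β (max t s) (dist y w)) := by
  rcases le_total t s with hts | hst
  · rw [min_eq_right (((div_le_one hs).2 hts).trans ((one_le_div ht).2 hts)), max_eq_right hts]
    exact hφ.abs_integral_dilate_mul_dilate_le_of_le hψ hν hνγ hνβ ht hts y w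
  · simp_rw [mul_comm (dilate t φ _ y)]
    rw [min_eq_left (((div_le_one ht).2 hst).trans ((one_le_div hs).2 hst)), max_eq_left hst,
      dist_comm]
    exact hψ.abs_integral_dilate_mul_dilate_le_of_le hφ hν hνγ hνβ hs hst w y

end MemHol

lemma mul_rpow_mul_kernelProfile_le {d : ℕ} {β C u e ν M r : ℝ} (hC : 0 ≤ C) (hu₀ : 0 < u)
    (hu₁ : u ≤ 1) (he : e ≤ ν) (hβ : 0 ≤ β) (hM : 0 < M) (hr : 0 ≤ r) :
    C * (u ^ ν * kernelProfile d β M r) ≤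
      (C + 1) * u ^ e * M⁻¹ ^ (d : ℝ) / (1 + M⁻¹ * r) ^ ((d : ℝ) + β / 2) := by
  rw [mul_div_assoc, ← kernelProfile_eq_div hM hr, mul_assoc]
  exact mul_le_mul (by linarith)
    (mul_le_mul (rpow_le_rpow_of_exponent_ge hu₀ hu₁ he)
      (kernelProfile_anti (by linarith) hM hr) (kernelProfile_nonneg hM.le hr) (by positivity))
    (mul_nonneg (by positivity) (kernelProfile_nonneg hM.le hr)) (by linarith)

/-- The kernel estimate for `Λ^θ_{t,s}(y,w) = ∫ θ_t(y,z) k(s,z,w) dz`,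
uniform over `θ ∈ H_{γ,β}`, where `ν = min{γ,β}/2` and `ζ = (d + β/2)/(d + β)`. -/
theorem theta_k_kernel_estimate :
    ∀ d : ℕ, 1 ≤ d →
    ∀ β γ : ℝ, 0 < β → β ≤ 1 → 0 < γ → γ ≤ 1 →
    ∀ Ck : ℝ, 0 < Ck →
    ∃ C : ℝ, 0 < C ∧
      ∀ k : ℝ → Euc d → Euc d → ℝ,
        (∀ t > (0:ℝ), MemHol d γ β
          (fun x y => Ck⁻¹ * (t ^ d * k t (t • x) (t • y)))) →
        (∀ s > (0:ℝ), ∀ w : Euc d, ∫ z, k s z w = 0) →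
        ∀ θ : Euc d → Euc d → ℝ, MemHol d γ β θ →
        ∀ t > (0:ℝ), ∀ s > (0:ℝ), ∀ y w : Euc d,
          |∫ z, ((t ^ d)⁻¹ * θ (t⁻¹ • y) (t⁻¹ • z)) * k s z w| ≤
            C * min (s / t) (t / s) ^
                ((1 - ((d : ℝ) + β / 2) / ((d : ℝ) + β)) * (min γ β / 2)) *
              min t⁻¹ s⁻¹ ^ (d : ℝ) /
              (1 + min t⁻¹ s⁻¹ * dist y w) ^ ((d : ℝ) + β / 2) := by
  intro d _ β γ hβ _ hγ _ Ck hCk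
  set ν := min γ β / 2 with hν_def
  have hν : 0 < ν := by positivity
  have hνγ : ν ≤ γ := by linarith [min_le_left γ β]
  have hνβ : 2 * ν ≤ β := by linarith [min_le_right γ β]
  have hC := almostOrthConst_nonneg d β ν
  refine ⟨Ck * almostOrthConst d β ν + 1, by positivity, ?_⟩
  intro k hk _ θ hθ t ht s hs y w
  have hintegrand : ∀ z, (t ^ d)⁻¹ * θ (t⁻¹ • y) (t⁻¹ • z) * k s z w =
      Ck * (dilate t (Function.swap θ) z y *
        dilate s (fun x y => Ck⁻¹ * (s ^ d * k s (s • x) (s • y))) z w) :=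
    fun z => by rw [mul_left_comm, mul_dilate_rescale hCk.ne' hs.ne']; rfl
  simp_rw [hintegrand, min_inv_inv_of_pos ht hs]
  rw [integral_const_mul, abs_mul, abs_of_pos hCk]
  refine (mul_le_mul_of_nonneg_left (hθ.swap.abs_integral_dilate_mul_dilate_le (hk s hs)
    hν hνγ hνβ ht hs y w) hCk.le).trans ?_
  rw [← mul_assoc]
  exact mul_rpow_mul_kernelProfile_le (by positivity) (lt_min (div_pos hs ht) (div_pos ht hs))
    (min_div_div_le_one hs ht) (mul_le_of_le_one_left hν.le (sub_le_self _ (by positivity)))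
    hβ.le (lt_max_of_lt_left ht) dist_nonneg
end
end
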